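/- Let γ > 0, λ > 0 and τ ∈ ℝ^{d×d}_s. Define v := (1/λ)·max{0, 1 − γ/|τ^D|}·τ^D when τ^D ≠ 0, and v := 0 when τ^D = 0. Then the point q := τ − λv satisfies q ∈ K and v : (σ − q) ≤ 0 for all σ ∈ K; moreover v is the unique element of ℝ^{d×d}_s with these two properties. (Hence v is the value at τ of the Yosida approximation with parameter λ of the convex subdifferential of the indicator function of K.) -/

import Mathlib

open scoped Classical

/-- The Frobenius inner product `σ : τ = trace (σ τ)` on (symmetric) matrices. -/
noncomputable def frob {d : ℕ} (A B : Matrix (Fin d) (Fin d) ℝ) : ℝ :=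
  Matrix.trace (A * B)

/-- The norm induced by the Frobenius inner product (on symmetric matrices). -/
noncomputable def fnorm {d : ℕ} (A : Matrix (Fin d) (Fin d) ℝ) : ℝ :=
  Real.sqrt (frob A A)

/-- The deviator `τ^D = τ - (trace τ / d) • I`. -/
noncomputable def dev {d : ℕ} (A : Matrix (Fin d) (Fin d) ℝ) : Matrix (Fin d) (Fin d) ℝ :=
  A - (Matrix.trace A / (d : ℝ)) • (1 : Matrix (Fin d) (Fin d) ℝ)

/-- The smoothed max function `max_s`. -/
noncomputable def maxs (s r : ℝ) : ℝ :=
  if s ≤ |r| then max 0 r else (r + s) ^ 2 / (4 * s)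

/-- The smoothed von Mises resolvent `R_s`. -/
noncomputable def Rs {d : ℕ} (s γ : ℝ) (τ : Matrix (Fin d) (Fin d) ℝ) :
    Matrix (Fin d) (Fin d) ℝ :=
  if dev τ = 0 then τ else τ - maxs s (1 - γ / fnorm (dev τ)) • dev τ

/-- The value at `τ` of the Yosida approximation (parameter `λ`) of the convex
subdifferential of the indicator function of the von Mises set `K`. -/
noncomputable def yosidaV {d : ℕ} (γ lam : ℝ) (τ : Matrix (Fin d) (Fin d) ℝ) :
    Matrix (Fin d) (Fin d) ℝ :=
  if dev τ = 0 then 0 else (1 / lam) • (max 0 (1 - γ / fnorm (dev τ)) • dev τ)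

/-!
The resolvent `q = τ - λ v` is the projection of `τ` onto `K`. If `|τ^D| ≤ γ` then `v = 0` and
`q = τ`. Otherwise `q = τ - (1 - γ/|τ^D|) τ^D` only shrinks the deviator radially to length `γ`,
and `τ^D` is an outer normal of `K` at `q`: since `τ^D` is trace free it only sees deviators, so
`τ^D : (σ - q) = τ^D : σ^D - γ |τ^D| ≤ 0` by Cauchy–Schwarz. Uniqueness is the monotonicity of the
normal cone: adding the variational inequalities of two solutions `v`, `w` gives
`λ |v - w|² ≤ 0`.
-/

variable {d : ℕ}

section Frobenius

/-- On symmetric matrices `frob` is the Euclidean inner product of the entries, which yields its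
positivity and the Cauchy–Schwarz inequality. -/
def flatL2 (A : Matrix (Fin d) (Fin d) ℝ) : EuclideanSpace ℝ (Fin d × Fin d) :=
  WithLp.toLp 2 fun p => A p.1 p.2

lemma eq_zero_of_flatL2_eq_zero {A : Matrix (Fin d) (Fin d) ℝ} (h : flatL2 A = 0) : A = 0 := by
  ext i j
  simpa [flatL2] using congrArg (· (i, j)) h

lemma frob_eq_inner_flatL2 (A : Matrix (Fin d) (Fin d) ℝ) {B : Matrix (Fin d) (Fin d) ℝ}
    (hB : B.IsSymm) : frob A B = inner ℝ (flatL2 A) (flatL2 B) := by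
  simp only [frob, Matrix.trace, Matrix.diag_apply, Matrix.mul_apply, flatL2, PiLp.inner_apply,
    RCLike.inner_apply, conj_trivial, Fintype.sum_prod_type]
  exact Finset.sum_congr rfl fun i _ => Finset.sum_congr rfl fun j _ => by rw [hB.apply, mul_comm]

lemma fnorm_eq_norm_flatL2 {A : Matrix (Fin d) (Fin d) ℝ} (hA : A.IsSymm) :
    fnorm A = ‖flatL2 A‖ := by
  rw [fnorm, frob_eq_inner_flatL2 A hA, norm_eq_sqrt_real_inner]

lemma frob_self_nonneg {A : Matrix (Fin d) (Fin d) ℝ} (hA : A.IsSymm) : 0 ≤ frob A A :=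
  frob_eq_inner_flatL2 A hA ▸ real_inner_self_nonneg

lemma eq_zero_of_frob_self_nonpos {A : Matrix (Fin d) (Fin d) ℝ} (hA : A.IsSymm)
    (h : frob A A ≤ 0) : A = 0 :=
  eq_zero_of_flatL2_eq_zero <| real_inner_self_nonpos.mp (frob_eq_inner_flatL2 A hA ▸ h)

lemma fnorm_sq {A : Matrix (Fin d) (Fin d) ℝ} (hA : A.IsSymm) : fnorm A ^ 2 = frob A A :=
  Real.sq_sqrt (frob_self_nonneg hA)

lemma frob_le_fnorm_mul_fnorm {A B : Matrix (Fin d) (Fin d) ℝ} (hA : A.IsSymm) (hB : B.IsSymm) :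
    frob A B ≤ fnorm A * fnorm B := by
  rw [frob_eq_inner_flatL2 A hB, fnorm_eq_norm_flatL2 hA, fnorm_eq_norm_flatL2 hB]
  exact real_inner_le_norm (flatL2 A) (flatL2 B)

lemma fnorm_pos {A : Matrix (Fin d) (Fin d) ℝ} (hA : A.IsSymm) (h : A ≠ 0) : 0 < fnorm A := by
  rw [fnorm_eq_norm_flatL2 hA, norm_pos_iff]
  exact fun h0 => h (eq_zero_of_flatL2_eq_zero h0)

lemma fnorm_zero : fnorm (0 : Matrix (Fin d) (Fin d) ℝ) = 0 := by
  simp [fnorm, frob]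

lemma fnorm_smul (c : ℝ) (A : Matrix (Fin d) (Fin d) ℝ) : fnorm (c • A) = |c| * fnorm A := by
  rw [fnorm, fnorm, frob, Matrix.smul_mul, Matrix.mul_smul, Matrix.trace_smul, Matrix.trace_smul,
    smul_smul, smul_eq_mul, ← sq, Real.sqrt_mul (sq_nonneg c), Real.sqrt_sq_eq_abs, frob]

lemma frob_smul_left (c : ℝ) (A B : Matrix (Fin d) (Fin d) ℝ) :
    frob (c • A) B = c * frob A B := by
  simp [frob]

lemma frob_smul_right (c : ℝ) (A B : Matrix (Fin d) (Fin d) ℝ) :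
    frob A (c • B) = c * frob A B := by
  simp [frob]

lemma frob_one_right (A : Matrix (Fin d) (Fin d) ℝ) : frob A 1 = Matrix.trace A := by
  rw [frob, Matrix.mul_one]

lemma frob_sub_left (A B C : Matrix (Fin d) (Fin d) ℝ) :
    frob (A - B) C = frob A C - frob B C := by
  simp [frob, Matrix.sub_mul]

lemma frob_sub_right (A B C : Matrix (Fin d) (Fin d) ℝ) :
    frob A (B - C) = frob A B - frob A C := by
  simp [frob, Matrix.mul_sub]

end Frobenius

section Deviator

lemma trace_dev (A : Matrix (Fin d) (Fin d) ℝ) : Matrix.trace (dev A) = 0 := by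
  rcases Nat.eq_zero_or_pos d with rfl | hd
  · simp [Matrix.trace]
  · have hd' : (d : ℝ) ≠ 0 := by positivity
    simp [dev, div_mul_cancel₀ _ hd']

lemma dev_dev (A : Matrix (Fin d) (Fin d) ℝ) : dev (dev A) = dev A := by
  rw [dev, trace_dev, zero_div, zero_smul, sub_zero]

lemma dev_sub (A B : Matrix (Fin d) (Fin d) ℝ) : dev (A - B) = dev A - dev B := by
  simp only [dev, Matrix.trace_sub, sub_div, sub_smul]
  abel

lemma dev_smul (c : ℝ) (A : Matrix (Fin d) (Fin d) ℝ) : dev (c • A) = c • dev A := by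
  simp only [dev, Matrix.trace_smul, smul_eq_mul, mul_div_assoc, smul_sub, smul_smul]

lemma Matrix.IsSymm.dev {A : Matrix (Fin d) (Fin d) ℝ} (hA : A.IsSymm) : (dev A).IsSymm :=
  hA.sub (Matrix.isSymm_one.smul _)

lemma frob_dev_dev_right (A B : Matrix (Fin d) (Fin d) ℝ) :
    frob (dev A) (dev B) = frob (dev A) B := by
  rw [show dev B = B - (Matrix.trace B / d) • 1 from rfl, frob_sub_right, frob_smul_right,
    frob_one_right, trace_dev, mul_zero, sub_zero]

lemma dev_sub_smul_dev (c : ℝ) (τ : Matrix (Fin d) (Fin d) ℝ) :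
    dev (τ - c • dev τ) = (1 - c) • dev τ := by
  rw [dev_sub, dev_smul, dev_dev, sub_smul, one_smul]

end Deviator

section Yosida

variable {γ lam : ℝ} {τ : Matrix (Fin d) (Fin d) ℝ}

lemma Matrix.IsSymm.yosidaV (hτ : τ.IsSymm) : (yosidaV γ lam τ).IsSymm := by
  unfold _root_.yosidaV
  split_ifs
  · exact Matrix.isSymm_zero
  · exact (hτ.dev.smul _).smul _

lemma yosidaV_eq_zero (hτ : τ.IsSymm) (hτK : fnorm (dev τ) ≤ γ) : yosidaV γ lam τ = 0 := by
  unfold yosidaV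
  split_ifs with h
  · rfl
  · rw [max_eq_left (by rw [sub_nonpos, one_le_div (fnorm_pos hτ.dev h)]; exact hτK), zero_smul,
      smul_zero]

lemma yosidaV_eq_of_lt (hγ : 0 ≤ γ) (hτK : γ < fnorm (dev τ)) :
    yosidaV γ lam τ = lam⁻¹ • (1 - γ / fnorm (dev τ)) • dev τ := by
  have hτ0 : dev τ ≠ 0 := by
    rintro h
    rw [h, fnorm_zero] at hτK
    exact hγ.not_gt hτK
  have ht : 0 < fnorm (dev τ) := hγ.trans_lt hτK
  rw [yosidaV, if_neg hτ0, one_div,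
    max_eq_right (by rw [sub_nonneg, div_le_one ht]; exact hτK.le)]

lemma fnorm_dev_sub_smul_dev (hγ : 0 ≤ γ) (hτK : γ < fnorm (dev τ)) :
    fnorm (dev (τ - (1 - γ / fnorm (dev τ)) • dev τ)) = γ := by
  have ht : 0 < fnorm (dev τ) := hγ.trans_lt hτK
  rw [dev_sub_smul_dev, sub_sub_cancel, fnorm_smul, abs_of_nonneg (by positivity),
    div_mul_cancel₀ _ ht.ne']

lemma frob_dev_sub_smul_dev_nonpos (hτ : τ.IsSymm) (hγ : 0 ≤ γ) (hτK : γ < fnorm (dev τ))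
    {σ : Matrix (Fin d) (Fin d) ℝ} (hσ : σ.IsSymm) (hσK : fnorm (dev σ) ≤ γ) :
    frob (dev τ) (σ - (τ - (1 - γ / fnorm (dev τ)) • dev τ)) ≤ 0 := by
  set t := fnorm (dev τ)
  have ht : 0 < t := hγ.trans_lt hτK
  have hCS : frob (dev τ) (dev σ) ≤ t * γ :=
    (frob_le_fnorm_mul_fnorm hτ.dev hσ.dev).trans (mul_le_mul_of_nonneg_left hσK ht.le)
  calc frob (dev τ) (σ - (τ - (1 - γ / t) • dev τ))
      = frob (dev τ) (dev σ) - γ / t * t ^ 2 := by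
        rw [← frob_dev_dev_right, dev_sub, dev_sub_smul_dev, sub_sub_cancel, frob_sub_right,
          frob_smul_right, ← fnorm_sq hτ.dev]
    _ ≤ t * γ - γ / t * t ^ 2 := by gcongr
    _ = 0 := by field_simp; ring

lemma yosidaV_spec (hτ : τ.IsSymm) (hγ : 0 ≤ γ) (hlam : 0 < lam) :
    ((τ - lam • yosidaV γ lam τ).IsSymm ∧ fnorm (dev (τ - lam • yosidaV γ lam τ)) ≤ γ) ∧
      ∀ σ : Matrix (Fin d) (Fin d) ℝ, σ.IsSymm → fnorm (dev σ) ≤ γ →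
        frob (yosidaV γ lam τ) (σ - (τ - lam • yosidaV γ lam τ)) ≤ 0 := by
  rcases le_or_gt (fnorm (dev τ)) γ with hτK | hτK
  · rw [yosidaV_eq_zero hτ hτK, smul_zero, sub_zero]
    exact ⟨⟨hτ, hτK⟩, fun σ _ _ => by rw [frob, Matrix.zero_mul, Matrix.trace_zero]⟩
  · have hc : 0 ≤ 1 - γ / fnorm (dev τ) := by
      rw [sub_nonneg, div_le_one (hγ.trans_lt hτK)]
      exact hτK.le
    rw [yosidaV_eq_of_lt hγ hτK, smul_inv_smul₀ hlam.ne']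
    refine ⟨⟨hτ.sub (hτ.dev.smul _), (fnorm_dev_sub_smul_dev hγ hτK).le⟩, fun σ hσ hσK => ?_⟩
    rw [frob_smul_left, frob_smul_left]
    exact mul_nonpos_of_nonneg_of_nonpos (inv_nonneg.2 hlam.le) <|
      mul_nonpos_of_nonneg_of_nonpos hc (frob_dev_sub_smul_dev_nonpos hτ hγ hτK hσ hσK)

end Yosida

lemma eq_of_frob_sub_resolvent_nonpos {lam : ℝ} (hlam : 0 < lam)
    {τ v w : Matrix (Fin d) (Fin d) ℝ} (hv : v.IsSymm) (hw : w.IsSymm)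
    (hvw : frob v ((τ - lam • w) - (τ - lam • v)) ≤ 0)
    (hwv : frob w ((τ - lam • v) - (τ - lam • w)) ≤ 0) : w = v := by
  rw [sub_sub_sub_cancel_left, ← smul_sub, frob_smul_right] at hvw hwv
  have h : lam * frob (v - w) (v - w) ≤ 0 := by
    simp only [frob_sub_left, frob_sub_right] at hvw hwv ⊢
    linarith
  exact (sub_eq_zero.mp (eq_zero_of_frob_self_nonpos (hv.sub hw)
    (nonpos_of_mul_nonpos_right h hlam))).symm

theorem yosida_approximation_of_vonMises_subdifferential_general
    (d : ℕ) (γ lam : ℝ) (hγ : 0 < γ) (hlam : 0 < lam)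
    (τ : Matrix (Fin d) (Fin d) ℝ) (hτ : τ.IsSymm) :
    ((τ - lam • yosidaV γ lam τ).IsSymm ∧
      fnorm (dev (τ - lam • yosidaV γ lam τ)) ≤ γ) ∧
    (∀ σ : Matrix (Fin d) (Fin d) ℝ, σ.IsSymm → fnorm (dev σ) ≤ γ →
      frob (yosidaV γ lam τ) (σ - (τ - lam • yosidaV γ lam τ)) ≤ 0) ∧
    (∀ w : Matrix (Fin d) (Fin d) ℝ, w.IsSymm →
      ((τ - lam • w).IsSymm ∧ fnorm (dev (τ - lam • w)) ≤ γ) →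
      (∀ σ : Matrix (Fin d) (Fin d) ℝ, σ.IsSymm → fnorm (dev σ) ≤ γ →
        frob w (σ - (τ - lam • w)) ≤ 0) →
      w = yosidaV γ lam τ) := by
  obtain ⟨hK, hVI⟩ := yosidaV_spec hτ hγ.le hlam
  exact ⟨hK, hVI, fun w hw hwK hwVI =>
    eq_of_frob_sub_resolvent_nonpos hlam hτ.yosidaV hw (hVI _ hwK.1 hwK.2) (hwVI _ hK.1 hK.2)⟩

/-- Let `γ > 0`, `λ > 0` and `τ ∈ ℝ^{d×d}_s`.  With
`v := (1/λ)·max{0, 1 - γ/|τ^D|}·τ^D` (and `v := 0` if `τ^D = 0`), the point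
`q := τ - λ•v` satisfies `q ∈ K` and `v : (σ - q) ≤ 0` for all `σ ∈ K`,
where `K = {σ ∈ ℝ^{d×d}_s : |σ^D| ≤ γ}`; moreover `v` is the unique element of
`ℝ^{d×d}_s` with these two properties. -/
theorem yosida_approximation_of_vonMises_subdifferential
    (d : ℕ) (hd : 0 < d) (γ lam : ℝ) (hγ : 0 < γ) (hlam : 0 < lam)
    (τ : Matrix (Fin d) (Fin d) ℝ) (hτ : τ.IsSymm) :
    ((τ - lam • yosidaV γ lam τ).IsSymm ∧
      fnorm (dev (τ - lam • yosidaV γ lam τ)) ≤ γ) ∧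
    (∀ σ : Matrix (Fin d) (Fin d) ℝ, σ.IsSymm → fnorm (dev σ) ≤ γ →
      frob (yosidaV γ lam τ) (σ - (τ - lam • yosidaV γ lam τ)) ≤ 0) ∧
    (∀ w : Matrix (Fin d) (Fin d) ℝ, w.IsSymm →
      ((τ - lam • w).IsSymm ∧ fnorm (dev (τ - lam • w)) ≤ γ) →
      (∀ σ : Matrix (Fin d) (Fin d) ℝ, σ.IsSymm → fnorm (dev σ) ≤ γ →
        frob w (σ - (τ - lam • w)) ≤ 0) →
      w = yosidaV γ lam τ) :=
  yosida_approximation_of_vonMises_subdifferential_general d γ lam hγ hlam τ hτ
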